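/- For a duplicial module M, the Dwyer–Kan operator satisfies π_n = (1 − b_{n+1}d_n)^{n+1} (1 − d_{n-1}b_n)^n. -/
import Mathlib


open CategoryTheory

universe v u

/-- A duplicial module in a pre-additive category `C`: objects `M n` together with
face maps `δ n i : M (n+1) ⟶ M n` (representing `∂_{n+1,i}`, meaningful for `0 ≤ i ≤ n+1`)
and degeneracy maps `σ n i : M n ⟶ M (n+1)` (representing `s_{n,i}`, meaningful for
`0 ≤ i ≤ n+1`, so including the extra degeneracy `s_{n,n+1}`), satisfying the standard
simplicial identities extended to include the extra degeneracy; the composite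
`∂_{n+1,0} s_{n,n+1}` is the duplicial operator `t_n`.
Here `f ≫ g` denotes "first apply `f`, then `g`". -/
structure DupMod (C : Type u) [Category.{v} C] [Preadditive C] where
  M : ℕ → C
  δ : ∀ n : ℕ, ℕ → (M (n + 1) ⟶ M n)
  σ : ∀ n : ℕ, ℕ → (M n ⟶ M (n + 1))
  /-- `∂_{n+1,k} ∂_{n+2,j} = ∂_{n+1,j} ∂_{n+2,k+1}` for `j ≤ k ≤ n+1`. -/
  δδ : ∀ n j k, j ≤ k → k ≤ n + 1 →
    δ (n + 1) j ≫ δ n k = δ (n + 1) (k + 1) ≫ δ n j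
  /-- `∂_{n+2,j} s_{n+1,k+1} = s_{n,k} ∂_{n+1,j}` for `1 ≤ (k+1)-j ≤ n+1`,
  i.e. `j ≤ k ≤ n+j`, with `k ≤ n+1`. -/
  δσ_lt : ∀ n j k, j ≤ k → k ≤ n + j → k ≤ n + 1 →
    σ (n + 1) (k + 1) ≫ δ (n + 1) j = δ n j ≫ σ n k
  /-- `∂_{n+1,j} s_{n,j} = 1` for `j ≤ n+1`. -/
  δσ_self : ∀ n j, j ≤ n + 1 → σ n j ≫ δ n j = 𝟙 (M n)
  /-- `∂_{n+1,j+1} s_{n,j} = 1` for `j ≤ n`. -/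
  δσ_succ : ∀ n j, j ≤ n → σ n j ≫ δ n (j + 1) = 𝟙 (M n)
  /-- `∂_{n+2,j+1} s_{n+1,k} = s_{n,k} ∂_{n+1,j}` for `k < j ≤ n+1`. -/
  δσ_gt : ∀ n j k, k < j → j ≤ n + 1 →
    σ (n + 1) k ≫ δ (n + 1) (j + 1) = δ n j ≫ σ n k
  /-- `s_{n+1,j} s_{n,k} = s_{n+1,k+1} s_{n,j}` for `j ≤ k ≤ n+1`. -/
  σσ : ∀ n j k, j ≤ k → k ≤ n + 1 →
    σ n k ≫ σ (n + 1) j = σ n j ≫ σ (n + 1) (k + 1)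

/-- Iterated composition: `cpow f m = f ≫ f ≫ ⋯ ≫ f` (`m` factors), i.e. `f^m`. -/
def cpow {C : Type u} [Category.{v} C] {A : C} (f : A ⟶ A) : ℕ → (A ⟶ A)
  | 0 => 𝟙 A
  | m + 1 => f ≫ cpow f m

namespace DupMod

variable {C : Type u} [Category.{v} C] [Preadditive C] (X : DupMod C)

/-- The simplicial differential `b_{n+1} = ∑_{i=0}^{n+1} (-1)^i ∂_{n+1,i} : M_{n+1} → M_n`. -/
def b (n : ℕ) : X.M (n + 1) ⟶ X.M n :=
  ∑ i ∈ Finset.range (n + 2), ((-1 : ℤ) ^ i) • X.δ n i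

/-- The Dwyer–Kan differential `d_n = ∑_{i=0}^{n+1} (-1)^i s_{n,i} : M_n → M_{n+1}`. -/
def d (n : ℕ) : X.M n ⟶ X.M (n + 1) :=
  ∑ i ∈ Finset.range (n + 2), ((-1 : ℤ) ^ i) • X.σ n i

/-- The duplicial operator `t_n = ∂_{n+1,0} s_{n,n+1} : M_n → M_n`. -/
def t (n : ℕ) : X.M n ⟶ X.M n := X.σ n (n + 1) ≫ X.δ n 0

/-- The Karoubi operator `κ_n = (-1)^n (∂_{n+1,0} s_{n,n+1} - s_{n-1,n} ∂_{n,0}) : M_n → M_n`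
(for `n = 0` the second term is absent). -/
def κ : ∀ n : ℕ, X.M n ⟶ X.M n
  | 0 => X.σ 0 1 ≫ X.δ 0 0
  | n + 1 => ((-1 : ℤ) ^ (n + 1)) •
      (X.σ (n + 1) (n + 2) ≫ X.δ (n + 1) 0 - X.δ n 0 ≫ X.σ n (n + 1))

end DupMod

/-- The Dwyer–Kan operator, in the form `π_n = κ_n^n − b_{n+1} κ_{n+1}^n d_n`. -/
def DupMod.π {C : Type u} [Category.{v} C] [Preadditive C] (X : DupMod C) (n : ℕ) :
    X.M n ⟶ X.M n :=
  cpow (X.κ n) n - X.d n ≫ cpow (X.κ (n + 1)) n ≫ X.b n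

namespace DupMod
open Finset

variable {C : Type u} [Category.{v} C] [Preadditive C] (X : DupMod C)

theorem b_sq (n : ℕ) : X.b (n + 1) ≫ X.b n = 0 := by
  show (∑ i ∈ range (n + 3), ((-1 : ℤ) ^ i) • X.δ (n+1) i) ≫
      (∑ j ∈ range (n + 2), ((-1 : ℤ) ^ j) • X.δ n j) = 0
  rw [Preadditive.sum_comp]
  simp_rw [Preadditive.comp_sum, Preadditive.zsmul_comp, Preadditive.comp_zsmul, smul_smul,
    ← pow_add]
  rw [← Finset.sum_product']
  rw [← Finset.sum_filter_add_sum_filter_not (range (n+3) ×ˢ range (n+2))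
    (fun p => p.1 ≤ p.2)]
  have key : ∑ p ∈ (range (n+3) ×ˢ range (n+2)).filter (fun p => p.1 ≤ p.2),
      ((-1:ℤ) ^ (p.1 + p.2)) • (X.δ (n+1) p.1 ≫ X.δ n p.2)
      = ∑ p ∈ (range (n+3) ×ˢ range (n+2)).filter (fun p => ¬ p.1 ≤ p.2),
      (-(((-1:ℤ) ^ (p.1 + p.2)) • (X.δ (n+1) p.1 ≫ X.δ n p.2))) := by
    apply Finset.sum_nbij' (fun p => (p.2 + 1, p.1)) (fun q => (q.2, q.1 - 1))
    · intro a ha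
      simp only [Finset.mem_filter, Finset.mem_product, Finset.mem_range] at ha ⊢
      omega
    · intro a ha
      simp only [Finset.mem_filter, Finset.mem_product, Finset.mem_range] at ha ⊢
      omega
    · intro a ha; simp only [Finset.mem_filter, Finset.mem_product, Finset.mem_range] at ha
      ext <;> simp <;> omega
    · intro a ha; simp only [Finset.mem_filter, Finset.mem_product, Finset.mem_range] at ha
      ext <;> simp <;> omega
    · intro a ha
      simp only [Finset.mem_filter, Finset.mem_product, Finset.mem_range] at ha
      obtain ⟨⟨h1, h2⟩, h3⟩ := ha
      rw [X.δδ n a.1 a.2 h3 (by omega)]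
      have : (-1:ℤ) ^ (a.2 + 1 + a.1) = -(-1:ℤ) ^ (a.1 + a.2) := by
        rw [show a.2 + 1 + a.1 = (a.1 + a.2) + 1 by omega, pow_succ]; ring
      rw [this, neg_smul, neg_neg]
  rw [key, Finset.sum_neg_distrib, neg_add_cancel]

theorem d_sq (n : ℕ) : X.d n ≫ X.d (n + 1) = 0 := by
  show (∑ i ∈ range (n + 2), ((-1 : ℤ) ^ i) • X.σ n i) ≫
      (∑ j ∈ range (n + 3), ((-1 : ℤ) ^ j) • X.σ (n+1) j) = 0
  rw [Preadditive.sum_comp]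
  simp_rw [Preadditive.comp_sum, Preadditive.zsmul_comp, Preadditive.comp_zsmul, smul_smul,
    ← pow_add]
  rw [← Finset.sum_product']
  rw [← Finset.sum_filter_add_sum_filter_not (range (n+2) ×ˢ range (n+3))
    (fun p => p.2 ≤ p.1)]
  have key : ∑ p ∈ (range (n+2) ×ˢ range (n+3)).filter (fun p => p.2 ≤ p.1),
      ((-1:ℤ) ^ (p.1 + p.2)) • (X.σ n p.1 ≫ X.σ (n+1) p.2)
      = ∑ p ∈ (range (n+2) ×ˢ range (n+3)).filter (fun p => ¬ p.2 ≤ p.1),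
      (-(((-1:ℤ) ^ (p.1 + p.2)) • (X.σ n p.1 ≫ X.σ (n+1) p.2))) := by
    apply Finset.sum_nbij' (fun p => (p.2, p.1 + 1)) (fun q => (q.2 - 1, q.1))
    · intro a ha
      simp only [Finset.mem_filter, Finset.mem_product, Finset.mem_range] at ha ⊢
      omega
    · intro a ha
      simp only [Finset.mem_filter, Finset.mem_product, Finset.mem_range] at ha ⊢
      omega
    · intro a ha; simp only [Finset.mem_filter, Finset.mem_product, Finset.mem_range] at ha
      ext <;> simp
    · intro a ha; simp only [Finset.mem_filter, Finset.mem_product, Finset.mem_range] at ha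
      ext <;> simp <;> omega
    · intro a ha
      simp only [Finset.mem_filter, Finset.mem_product, Finset.mem_range] at ha
      obtain ⟨⟨h1, h2⟩, h3⟩ := ha
      rw [X.σσ n a.2 a.1 h3 (by omega)]
      have : (-1:ℤ) ^ (a.2 + (a.1 + 1)) = -(-1:ℤ) ^ (a.1 + a.2) := by
        rw [show a.2 + (a.1 + 1) = (a.1 + a.2) + 1 by omega, pow_succ]; ring
      rw [this, neg_smul, neg_neg]
  rw [key, Finset.sum_neg_distrib, neg_add_cancel]

end DupMod
namespace DupMod
open Finset

variable {C : Type u} [Category.{v} C] [Preadditive C] (X : DupMod C)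

set_option maxHeartbeats 1000000 in
theorem db_add_bd (n : ℕ) :
    X.d (n + 1) ≫ X.b (n + 1) + X.b n ≫ X.d n
      = (𝟙 (X.M (n + 1)) + ((-1 : ℤ) ^ n) • X.t (n + 1))
        + ((-1 : ℤ) ^ (n + 1)) • (X.δ n 0 ≫ X.σ n (n + 1)) := by
  have hdb : X.d (n + 1) ≫ X.b (n + 1)
      = ∑ p ∈ range (n + 3) ×ˢ range (n + 3),
          ((-1 : ℤ) ^ (p.1 + p.2)) • (X.σ (n + 1) p.1 ≫ X.δ (n + 1) p.2) := by
    show (∑ i ∈ range (n + 3), ((-1 : ℤ) ^ i) • X.σ (n+1) i) ≫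
        (∑ j ∈ range (n + 3), ((-1 : ℤ) ^ j) • X.δ (n+1) j) = _
    rw [Preadditive.sum_comp]
    simp_rw [Preadditive.comp_sum, Preadditive.zsmul_comp, Preadditive.comp_zsmul, smul_smul,
      ← pow_add]
    rw [← Finset.sum_product']
  have hbd : X.b n ≫ X.d n
      = ∑ q ∈ range (n + 2) ×ˢ range (n + 2),
          ((-1 : ℤ) ^ (q.1 + q.2)) • (X.δ n q.1 ≫ X.σ n q.2) := by
    show (∑ i ∈ range (n + 2), ((-1 : ℤ) ^ i) • X.δ n i) ≫
        (∑ j ∈ range (n + 2), ((-1 : ℤ) ^ j) • X.σ n j) = _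
    rw [Preadditive.sum_comp]
    simp_rw [Preadditive.comp_sum, Preadditive.zsmul_comp, Preadditive.comp_zsmul, smul_smul,
      ← pow_add]
    rw [← Finset.sum_product']
  rw [hdb, hbd]
  -- split the db sum
  rw [← Finset.sum_filter_add_sum_filter_not (range (n+3) ×ˢ range (n+3))
    (fun p => p.2 = p.1)]
  rw [← Finset.sum_filter_add_sum_filter_not
    ((range (n+3) ×ˢ range (n+3)).filter (fun p => ¬ p.2 = p.1))
    (fun p => p.2 = p.1 + 1)]
  rw [← Finset.sum_filter_add_sum_filter_not
    (((range (n+3) ×ˢ range (n+3)).filter (fun p => ¬ p.2 = p.1)).filter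
      (fun p => ¬ p.2 = p.1 + 1))
    (fun p => p.1 = n + 2 ∧ p.2 = 0)]
  simp only [Finset.filter_filter]
  -- split the bd sum
  rw [← Finset.sum_filter_add_sum_filter_not (range (n+2) ×ˢ range (n+2))
    (fun q => q.1 = 0 ∧ q.2 = n + 1)]
  -- diagonal
  have hD : ∑ p ∈ (range (n+3) ×ˢ range (n+3)).filter (fun p => p.2 = p.1),
      ((-1 : ℤ) ^ (p.1 + p.2)) • (X.σ (n + 1) p.1 ≫ X.δ (n + 1) p.2)
      = (n + 2) • 𝟙 (X.M (n + 1)) + 𝟙 (X.M (n + 1)) := by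
    have e1 : ∑ p ∈ (range (n+3) ×ˢ range (n+3)).filter (fun p => p.2 = p.1),
        ((-1 : ℤ) ^ (p.1 + p.2)) • (X.σ (n + 1) p.1 ≫ X.δ (n + 1) p.2)
        = ∑ _i ∈ range (n + 3), 𝟙 (X.M (n + 1)) := by
      apply Finset.sum_nbij' (fun p => p.1) (fun i => (i, i))
      · intro a ha
        simp only [Finset.mem_filter, Finset.mem_product, Finset.mem_range] at ha ⊢
        (try simp only [eq_self_iff_true, and_true, true_and, and_self]); omega
      · intro a ha
        simp only [Finset.mem_filter, Finset.mem_product, Finset.mem_range] at ha ⊢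
        (try simp only [eq_self_iff_true, and_true, true_and, and_self]); omega
      · intro a ha
        simp only [Finset.mem_filter, Finset.mem_product, Finset.mem_range] at ha
        obtain ⟨a1, a2⟩ := a
        simp only at ha ⊢
        rw [ha.2]
      · intro a _; rfl
      · intro a ha
        simp only [Finset.mem_filter, Finset.mem_product, Finset.mem_range] at ha
        rw [ha.2, X.δσ_self (n+1) a.1 (by omega)]
        rw [show a.1 + a.1 = 2 * a.1 by omega]
        simp
    rw [e1, Finset.sum_const, Finset.card_range, succ_nsmul]
  -- superdiagonal
  have hSD : ∑ p ∈ (range (n+3) ×ˢ range (n+3)).filter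
        (fun p => ¬ p.2 = p.1 ∧ p.2 = p.1 + 1),
      ((-1 : ℤ) ^ (p.1 + p.2)) • (X.σ (n + 1) p.1 ≫ X.δ (n + 1) p.2)
      = -((n + 2) • 𝟙 (X.M (n + 1))) := by
    have e1 : ∑ p ∈ (range (n+3) ×ˢ range (n+3)).filter
          (fun p => ¬ p.2 = p.1 ∧ p.2 = p.1 + 1),
        ((-1 : ℤ) ^ (p.1 + p.2)) • (X.σ (n + 1) p.1 ≫ X.δ (n + 1) p.2)
        = ∑ _i ∈ range (n + 2), -𝟙 (X.M (n + 1)) := by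
      apply Finset.sum_nbij' (fun p => p.1) (fun i => (i, i + 1))
      · intro a ha
        simp only [Finset.mem_filter, Finset.mem_product, Finset.mem_range] at ha ⊢
        (try simp only [eq_self_iff_true, and_true, true_and, and_self]); omega
      · intro a ha
        simp only [Finset.mem_filter, Finset.mem_product, Finset.mem_range] at ha ⊢
        (try simp only [eq_self_iff_true, and_true, true_and, and_self]); omega
      · intro a ha
        simp only [Finset.mem_filter, Finset.mem_product, Finset.mem_range] at ha
        obtain ⟨a1, a2⟩ := a
        simp only at ha ⊢
        rw [ha.2.2]
      · intro a _; rfl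
      · intro a ha
        simp only [Finset.mem_filter, Finset.mem_product, Finset.mem_range] at ha
        rw [ha.2.2, X.δσ_succ (n+1) a.1 (by omega)]
        rw [show a.1 + (a.1 + 1) = 2 * a.1 + 1 by omega, pow_succ]
        simp
    rw [e1, Finset.sum_const, Finset.card_range, smul_neg]
  -- singleton t-term
  have hsingle : ((range (n+3) ×ˢ range (n+3)).filter
        (fun p => (¬ p.2 = p.1 ∧ ¬ p.2 = p.1 + 1) ∧ p.1 = n + 2 ∧ p.2 = 0))
      = {((n + 2 : ℕ), (0 : ℕ))} := by
    ext ⟨a1, a2⟩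
    simp only [Finset.mem_filter, Finset.mem_product, Finset.mem_range,
      Finset.mem_singleton, Prod.mk.injEq]
    omega
  have hT : ∑ p ∈ (range (n+3) ×ˢ range (n+3)).filter
        (fun p => (¬ p.2 = p.1 ∧ ¬ p.2 = p.1 + 1) ∧ p.1 = n + 2 ∧ p.2 = 0),
      ((-1 : ℤ) ^ (p.1 + p.2)) • (X.σ (n + 1) p.1 ≫ X.δ (n + 1) p.2)
      = ((-1 : ℤ) ^ n) • X.t (n + 1) := by
    rw [hsingle, Finset.sum_singleton]
    show ((-1 : ℤ) ^ (n + 2 + 0)) • (X.σ (n+1) (n+2) ≫ X.δ (n+1) 0) = _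
    have h2 : ((-1 : ℤ)) ^ (n + 2 + 0) = (-1) ^ n := by
      rw [pow_add, pow_add]; norm_num
    rw [h2]; rfl
  -- singleton for bd
  have hsingle2 : ((range (n+2) ×ˢ range (n+2)).filter
        (fun q => q.1 = 0 ∧ q.2 = n + 1))
      = {((0 : ℕ), (n + 1 : ℕ))} := by
    ext ⟨a1, a2⟩
    simp only [Finset.mem_filter, Finset.mem_product, Finset.mem_range,
      Finset.mem_singleton, Prod.mk.injEq]
    omega
  have hE : ∑ q ∈ (range (n+2) ×ˢ range (n+2)).filter
        (fun q => q.1 = 0 ∧ q.2 = n + 1),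
      ((-1 : ℤ) ^ (q.1 + q.2)) • (X.δ n q.1 ≫ X.σ n q.2)
      = ((-1 : ℤ) ^ (n + 1)) • (X.δ n 0 ≫ X.σ n (n + 1)) := by
    rw [hsingle2, Finset.sum_singleton]
    show ((-1 : ℤ) ^ (0 + (n + 1))) • (X.δ n 0 ≫ X.σ n (n+1)) = _
    have h2 : ((-1 : ℤ)) ^ (0 + (n + 1)) = (-1) ^ (n + 1) := by
      rw [zero_add]
    rw [h2]
  -- main cancellation
  have hKey : ∑ p ∈ (range (n+3) ×ˢ range (n+3)).filter
        (fun p => (¬ p.2 = p.1 ∧ ¬ p.2 = p.1 + 1) ∧ ¬ (p.1 = n + 2 ∧ p.2 = 0)),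
      ((-1 : ℤ) ^ (p.1 + p.2)) • (X.σ (n + 1) p.1 ≫ X.δ (n + 1) p.2)
      = ∑ q ∈ (range (n+2) ×ˢ range (n+2)).filter
        (fun q => ¬ (q.1 = 0 ∧ q.2 = n + 1)),
      (-(((-1 : ℤ) ^ (q.1 + q.2)) • (X.δ n q.1 ≫ X.σ n q.2))) := by
    apply Finset.sum_nbij'
      (fun p => if p.1 < p.2 then (p.2 - 1, p.1) else (p.2, p.1 - 1))
      (fun q => if q.2 < q.1 then (q.2, q.1 + 1) else (q.2 + 1, q.1))
    · intro a ha
      simp only [Finset.mem_filter, Finset.mem_product, Finset.mem_range] at ha ⊢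
      obtain ⟨a1, a2⟩ := a
      dsimp only at ha ⊢
      split_ifs <;> dsimp only <;> omega
    · intro a ha
      simp only [Finset.mem_filter, Finset.mem_product, Finset.mem_range] at ha ⊢
      obtain ⟨a1, a2⟩ := a
      dsimp only at ha ⊢
      split_ifs <;> dsimp only <;> omega
    · intro a ha
      simp only [Finset.mem_filter, Finset.mem_product, Finset.mem_range] at ha
      obtain ⟨a1, a2⟩ := a
      dsimp only at ha ⊢
      split_ifs <;> dsimp only at * <;>
        simp only [Prod.mk.injEq, eq_self_iff_true, and_true, true_and, and_self] <;> omega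
    · intro a ha
      simp only [Finset.mem_filter, Finset.mem_product, Finset.mem_range] at ha
      obtain ⟨a1, a2⟩ := a
      dsimp only at ha ⊢
      split_ifs <;> dsimp only at * <;>
        simp only [Prod.mk.injEq, eq_self_iff_true, and_true, true_and, and_self] <;> omega
    · intro a ha
      simp only [Finset.mem_filter, Finset.mem_product, Finset.mem_range] at ha
      obtain ⟨⟨h1, h2⟩, ⟨h3, h4⟩, h5⟩ := ha
      by_cases h : a.1 < a.2
      · rw [if_pos h]
        have ha2 : a.2 = (a.2 - 1) + 1 := by omega
        rw [ha2, X.δσ_gt n (a.2 - 1) a.1 (by omega) (by omega)]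
        have hs : (-1 : ℤ) ^ (a.1 + ((a.2 - 1) + 1)) = -(-1 : ℤ) ^ ((a.2 - 1) + a.1) := by
          rw [show a.1 + ((a.2 - 1) + 1) = ((a.2 - 1) + a.1) + 1 by omega, pow_succ]; ring
        rw [hs]
        simp
      · rw [if_neg h]
        have ha1 : a.1 = (a.1 - 1) + 1 := by omega
        rw [ha1, X.δσ_lt n a.2 (a.1 - 1) (by omega) (by omega) (by omega)]
        have hs : (-1 : ℤ) ^ ((a.1 - 1) + 1 + a.2) = -(-1 : ℤ) ^ (a.2 + (a.1 - 1)) := by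
          rw [show (a.1 - 1) + 1 + a.2 = (a.2 + (a.1 - 1)) + 1 by omega, pow_succ]; ring
        rw [hs]
        simp
  rw [hD, hSD, hT, hE, hKey, Finset.sum_neg_distrib]
  abel

end DupMod
namespace DupMod
open Finset

variable {C : Type u} [Category.{v} C] [Preadditive C] (X : DupMod C)

theorem db_zero : X.d 0 ≫ X.b 0 = 𝟙 (X.M 0) - X.t 0 := by
  show (∑ i ∈ Finset.range 2, ((-1:ℤ)^i) • X.σ 0 i) ≫
      (∑ j ∈ Finset.range 2, ((-1:ℤ)^j) • X.δ 0 j) = _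
  rw [Finset.sum_range_succ, Finset.sum_range_succ, Finset.sum_range_zero,
    Finset.sum_range_succ, Finset.sum_range_succ, Finset.sum_range_zero]
  simp only [zero_add, pow_zero, pow_one, one_smul, neg_smul,
    Preadditive.add_comp, Preadditive.comp_add, Preadditive.neg_comp,
    Preadditive.comp_neg]
  rw [X.δσ_self 0 0 (by omega), X.δσ_self 0 1 (by omega), X.δσ_succ 0 0 (by omega)]
  show _ = 𝟙 _ - X.σ 0 1 ≫ X.δ 0 0
  abel

theorem κ_zero : X.κ 0 = 𝟙 (X.M 0) - X.d 0 ≫ X.b 0 := by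
  rw [X.db_zero]
  show X.t 0 = _
  abel

theorem κ_succ (n : ℕ) : X.κ (n + 1)
    = 𝟙 (X.M (n + 1)) - X.d (n + 1) ≫ X.b (n + 1) - X.b n ≫ X.d n := by
  have h := X.db_add_bd n
  have h2 : 𝟙 (X.M (n + 1)) - X.d (n + 1) ≫ X.b (n + 1) - X.b n ≫ X.d n
      = 𝟙 (X.M (n + 1)) - ((𝟙 (X.M (n + 1)) + ((-1 : ℤ) ^ n) • X.t (n + 1))
          + ((-1 : ℤ) ^ (n + 1)) • (X.δ n 0 ≫ X.σ n (n + 1))) := by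
    rw [← h]; abel
  rw [h2]
  show ((-1 : ℤ) ^ (n + 1)) •
      (X.σ (n + 1) (n + 2) ≫ X.δ (n + 1) 0 - X.δ n 0 ≫ X.σ n (n + 1)) = _
  have ht : X.σ (n + 1) (n + 2) ≫ X.δ (n + 1) 0 = X.t (n + 1) := rfl
  rw [smul_sub, ht]
  have hs : ((-1 : ℤ) ^ (n + 1)) • X.t (n + 1) = -(((-1 : ℤ) ^ n) • X.t (n + 1)) := by
    rw [pow_succ, ← neg_smul]; ring_nf
  rw [hs]
  abel

theorem d_κ (n : ℕ) : X.d n ≫ X.κ (n + 1) = X.κ n ≫ X.d n := by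
  match n with
  | 0 =>
    rw [X.κ_zero, X.κ_succ 0]
    simp only [Preadditive.comp_sub, Preadditive.sub_comp, Category.comp_id,
      Category.id_comp, Category.assoc]
    have hz : X.d 0 ≫ X.d (0 + 1) ≫ X.b (0 + 1) = 0 := by
      rw [← Category.assoc, X.d_sq 0]; simp
    rw [hz]
    abel
  | n + 1 =>
    rw [X.κ_succ n, X.κ_succ (n + 1)]
    simp only [Preadditive.comp_sub, Preadditive.sub_comp, Category.comp_id,
      Category.id_comp, Category.assoc]
    have hz1 : X.d (n + 1) ≫ X.d (n + 1 + 1) ≫ X.b (n + 1 + 1) = 0 := by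
      rw [← Category.assoc, X.d_sq (n + 1)]; simp
    have hz2 : X.b n ≫ X.d n ≫ X.d (n + 1) = 0 := by
      rw [X.d_sq n]; simp
    rw [hz1, hz2]
    abel

theorem cpow_comm {A B : C} (f : A ⟶ A) (g : B ⟶ B) (u : A ⟶ B)
    (h : u ≫ g = f ≫ u) (m : ℕ) : u ≫ cpow g m = cpow f m ≫ u := by
  induction m with
  | zero => simp [cpow]
  | succ m ih =>
    show u ≫ (g ≫ cpow g m) = (f ≫ cpow f m) ≫ u
    rw [← Category.assoc, h, Category.assoc, ih, ← Category.assoc]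

theorem cpow_succ' {A : C} (f : A ⟶ A) (m : ℕ) : cpow f (m + 1) = cpow f m ≫ f := by
  induction m with
  | zero => show f ≫ 𝟙 A = 𝟙 A ≫ f; simp
  | succ m ih =>
    show f ≫ cpow f (m + 1) = (f ≫ cpow f m) ≫ f
    rw [ih, ← Category.assoc]

theorem cpow_mul {A : C} (f g : A ⟶ A) (h : f ≫ g = g ≫ f) (m : ℕ) :
    cpow (f ≫ g) m = cpow f m ≫ cpow g m := by
  induction m with
  | zero => simp [cpow]
  | succ m ih =>
    show (f ≫ g) ≫ cpow (f ≫ g) m = (f ≫ cpow f m) ≫ (g ≫ cpow g m)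
    rw [ih]
    have hc : g ≫ cpow f m = cpow f m ≫ g := cpow_comm f f g h.symm m
    rw [Category.assoc, Category.assoc, ← Category.assoc (cpow f m) g (cpow g m), ← hc]
    simp [Category.assoc]

theorem QP (n : ℕ) :
    (𝟙 (X.M (n + 1)) - X.b n ≫ X.d n) ≫ (𝟙 (X.M (n + 1)) - X.d (n + 1) ≫ X.b (n + 1))
      = X.κ (n + 1) := by
  rw [X.κ_succ n]
  simp only [Preadditive.comp_sub, Preadditive.sub_comp, Category.comp_id,
    Category.id_comp, Category.assoc]
  have hz : X.b n ≫ X.d n ≫ X.d (n + 1) ≫ X.b (n + 1) = 0 := by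
    rw [← Category.assoc (X.d n), X.d_sq n]; simp
  rw [hz]
  abel

theorem PQ (n : ℕ) :
    (𝟙 (X.M (n + 1)) - X.d (n + 1) ≫ X.b (n + 1)) ≫ (𝟙 (X.M (n + 1)) - X.b n ≫ X.d n)
      = X.κ (n + 1) := by
  rw [X.κ_succ n]
  simp only [Preadditive.comp_sub, Preadditive.sub_comp, Category.comp_id,
    Category.id_comp, Category.assoc]
  have hz : X.d (n + 1) ≫ X.b (n + 1) ≫ X.b n ≫ X.d n = 0 := by
    rw [← Category.assoc (X.b (n + 1)), X.b_sq n]; simp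
  rw [hz]
  abel

end DupMod

theorem dwyer_kan_power_factorization' {C : Type u} [Category.{v} C] [Preadditive C]
    (X : DupMod C) :
    (∀ n : ℕ, X.π (n + 1)
        = cpow (𝟙 (X.M (n + 1)) - X.b n ≫ X.d n) (n + 1)
            ≫ cpow (𝟙 (X.M (n + 1)) - X.d (n + 1) ≫ X.b (n + 1)) (n + 2)) ∧
    (X.π 0 = 𝟙 (X.M 0) - X.d 0 ≫ X.b 0) := by
  constructor
  · intro n
    set Q := 𝟙 (X.M (n + 1)) - X.b n ≫ X.d n with hQ
    set P := 𝟙 (X.M (n + 1)) - X.d (n + 1) ≫ X.b (n + 1) with hP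
    have hQPκ : Q ≫ P = X.κ (n + 1) := X.QP n
    have hPQκ : P ≫ Q = X.κ (n + 1) := X.PQ n
    have hRHS : cpow Q (n + 1) ≫ cpow P (n + 2)
        = cpow (X.κ (n + 1)) (n + 1) ≫ P := by
      rw [DupMod.cpow_succ' P (n + 1), ← Category.assoc,
        ← DupMod.cpow_mul Q P (by rw [hQPκ, hPQκ]) (n + 1), hQPκ]
    rw [hRHS]
    show cpow (X.κ (n + 1)) (n + 1)
        - X.d (n + 1) ≫ cpow (X.κ (n + 2)) (n + 1) ≫ X.b (n + 1) = _
    rw [← Category.assoc,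
      DupMod.cpow_comm (X.κ (n + 1)) (X.κ (n + 2)) (X.d (n + 1)) (X.d_κ (n + 1)) (n + 1)]
    rw [hP]
    simp only [Preadditive.comp_sub, Category.comp_id, Category.assoc]
  · show cpow (X.κ 0) 0 - X.d 0 ≫ cpow (X.κ 1) 0 ≫ X.b 0 = _
    show 𝟙 (X.M 0) - X.d 0 ≫ 𝟙 (X.M 1) ≫ X.b 0 = _
    simp
/-- For a duplicial module `M`, the Dwyer–Kan operator satisfies
`π_n = (1 − b_{n+1}d_n)^{n+1} (1 − d_{n-1}b_n)^n` (products composed right factor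
first; at `n = 0` the second factor is an empty product). -/
theorem dwyer_kan_power_factorization {C : Type u} [Category.{v} C] [Preadditive C]
    (X : DupMod C) :
    (∀ n : ℕ, X.π (n + 1)
        = cpow (𝟙 (X.M (n + 1)) - X.b n ≫ X.d n) (n + 1)
            ≫ cpow (𝟙 (X.M (n + 1)) - X.d (n + 1) ≫ X.b (n + 1)) (n + 2)) ∧
    (X.π 0 = 𝟙 (X.M 0) - X.d 0 ≫ X.b 0) := by
  exact dwyer_kan_power_factorization' X
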